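/- Merge is idempotent, commutative, and associative: merge B B B holds for all B; merge B1 B2 B implies merge B2 B1 B; and if merge B1 B2 B12 and merge B12 B3 B then there exists B23 with merge B2 B3 B23 and merge B1 B23 B. -/
import Mathlib


/-- Behaviours of Stateful Processes. Labels `left`/`right` are modelled as
`Bool` (`true` = left, `false` = right). -/
inductive Beh (P E V X : Type) : Type
  | endB : Beh P E V X
  | send : P → E → Beh P E V X → Beh P E V X
  | recv : P → V → Beh P E V X → Beh P E V X
  | sel : P → Bool → Beh P E V X → Beh P E V X
  | branch : P → Option (Beh P E V X) → Option (Beh P E V X) → Beh P E V X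
  | cond : E → Beh P E V X → Beh P E V X → Beh P E V X
  | call : X → Beh P E V X

mutual
/-- The merge relation on behaviours. -/
inductive merge {P E V X : Type} :
    Beh P E V X → Beh P E V X → Beh P E V X → Prop
  | endB : merge .endB .endB .endB
  | send {B1 B2 B} (p : P) (e : E) :
      merge B1 B2 B → merge (.send p e B1) (.send p e B2) (.send p e B)
  | recv {B1 B2 B} (p : P) (x : V) :
      merge B1 B2 B → merge (.recv p x B1) (.recv p x B2) (.recv p x B)
  | sel {B1 B2 B} (p : P) (l : Bool) :
      merge B1 B2 B → merge (.sel p l B1) (.sel p l B2) (.sel p l B)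
  | branch {l1 l2 l r1 r2 r} (p : P) :
      omerge l1 l2 l → omerge r1 r2 r →
      merge (.branch p l1 r1) (.branch p l2 r2) (.branch p l r)
  | cond {Bt1 Bt2 Bt Be1 Be2 Be} (e : E) :
      merge Bt1 Bt2 Bt → merge Be1 Be2 Be →
      merge (.cond e Bt1 Be1) (.cond e Bt2 Be2) (.cond e Bt Be)
  | call (x : X) : merge (.call x) (.call x) (.call x)

/-- Componentwise merge of optional behaviours. -/
inductive omerge {P E V X : Type} :
    Option (Beh P E V X) → Option (Beh P E V X) → Option (Beh P E V X) → Prop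
  | nn : omerge none none none
  | sn (b : Beh P E V X) : omerge (some b) none (some b)
  | ns (b : Beh P E V X) : omerge none (some b) (some b)
  | ss {b1 b2 b : Beh P E V X} : merge b1 b2 b → omerge (some b1) (some b2) (some b)
end

mutual
/-- The branching order on behaviours: `mb B B'` means `B` offers at least the
branches of `B'` (written `B ≽ B'`). -/
inductive mb {P E V X : Type} : Beh P E V X → Beh P E V X → Prop
  | endB : mb .endB .endB
  | send {B B'} (p : P) (e : E) : mb B B' → mb (.send p e B) (.send p e B')
  | recv {B B'} (p : P) (x : V) : mb B B' → mb (.recv p x B) (.recv p x B')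
  | sel {B B'} (p : P) (l : Bool) : mb B B' → mb (.sel p l B) (.sel p l B')
  | branch_nn (p : P) (mL mR : Option (Beh P E V X)) :
      mb (.branch p mL mR) (.branch p none none)
  | branch_ns {Br Br'} (p : P) (mL : Option (Beh P E V X)) :
      mb Br Br' → mb (.branch p mL (some Br)) (.branch p none (some Br'))
  | branch_sn {Bl Bl'} (p : P) (mR : Option (Beh P E V X)) :
      mb Bl Bl' → mb (.branch p (some Bl) mR) (.branch p (some Bl') none)
  | branch_ss {Bl Bl' Br Br'} (p : P) :
      mb Bl Bl' → mb Br Br' →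
      mb (.branch p (some Bl) (some Br)) (.branch p (some Bl') (some Br'))
  | cond {B1 B1' B2 B2'} (e : E) :
      mb B1 B1' → mb B2 B2' → mb (.cond e B1 B2) (.cond e B1' B2')
  | call (x : X) : mb (.call x) (.call x)
end

theorem merge_idem' {P E V X : Type} : ∀ B : Beh P E V X, merge B B B :=
  Beh.rec (motive_2 := fun o => omerge o o o)
    .endB (fun p e _ ih => .send p e ih) (fun p x _ ih => .recv p x ih)
    (fun p l _ ih => .sel p l ih) (fun p _ _ ihl ihr => .branch p ihl ihr)
    (fun e _ _ i1 i2 => .cond e i1 i2) (fun x => .call x)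
    .nn (fun _ ih => .ss ih)

theorem merge_comm' {P E V X : Type} {B1 B2 B : Beh P E V X} (h : merge B1 B2 B) :
    merge B2 B1 B :=
  merge.rec (motive_1 := fun a b c _ => merge b a c)
    (motive_2 := fun a b c _ => omerge b a c)
    .endB (fun p e _ ih => .send p e ih) (fun p x _ ih => .recv p x ih)
    (fun p l _ ih => .sel p l ih) (fun p _ _ ihl ihr => .branch p ihl ihr)
    (fun e _ _ i1 i2 => .cond e i1 i2) (fun x => .call x)
    .nn (fun b => .ns b) (fun b => .sn b) (fun _ ih => .ss ih) h

theorem merge_assoc' {P E V X : Type} {B1 B2 B12 : Beh P E V X} (h : merge B1 B2 B12) :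
    ∀ B3 B, merge B12 B3 B → ∃ B23, merge B2 B3 B23 ∧ merge B1 B23 B := by
  refine merge.rec
    (motive_1 := fun B1 B2 B12 _ => ∀ B3 B, merge B12 B3 B →
      ∃ B23, merge B2 B3 B23 ∧ merge B1 B23 B)
    (motive_2 := fun o1 o2 o12 _ => ∀ o3 o, omerge o12 o3 o →
      ∃ o23, omerge o2 o3 o23 ∧ omerge o1 o23 o)
    ?_ ?_ ?_ ?_ ?_ ?_ ?_ ?_ ?_ ?_ ?_ h
  · intro B3 B h; cases h; exact ⟨_, .endB, .endB⟩
  · intro B1 B2 B p e _ ih B3 B h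
    cases h with
    | send _ _ h' => obtain ⟨C, h1, h2⟩ := ih _ _ h'; exact ⟨_, .send p e h1, .send p e h2⟩
  · intro B1 B2 B p x _ ih B3 B h
    cases h with
    | recv _ _ h' => obtain ⟨C, h1, h2⟩ := ih _ _ h'; exact ⟨_, .recv p x h1, .recv p x h2⟩
  · intro B1 B2 B p l _ ih B3 B h
    cases h with
    | sel _ _ h' => obtain ⟨C, h1, h2⟩ := ih _ _ h'; exact ⟨_, .sel p l h1, .sel p l h2⟩
  · intro l1 l2 l r1 r2 r p _ _ ihl ihr B3 B h
    cases h with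
    | branch _ hl hr =>
      obtain ⟨L, hl1, hl2⟩ := ihl _ _ hl
      obtain ⟨R, hr1, hr2⟩ := ihr _ _ hr
      exact ⟨_, .branch p hl1 hr1, .branch p hl2 hr2⟩
  · intro Bt1 Bt2 Bt Be1 Be2 Be e _ _ iht ihe B3 B h
    cases h with
    | cond _ ht he =>
      obtain ⟨T, ht1, ht2⟩ := iht _ _ ht
      obtain ⟨Ee, he1, he2⟩ := ihe _ _ he
      exact ⟨_, .cond e ht1 he1, .cond e ht2 he2⟩
  · intro x B3 B h; cases h; exact ⟨_, .call x, .call x⟩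
  · intro o3 o h
    cases h with
    | nn => exact ⟨_, .nn, .nn⟩
    | ns b => exact ⟨_, .ns b, .ns b⟩
  · intro b o3 o h
    cases h with
    | sn => exact ⟨_, .nn, .sn b⟩
    | ss h' => exact ⟨_, .ns _, .ss h'⟩
  · intro b o3 o h
    cases h with
    | sn => exact ⟨_, .sn b, .ns b⟩
    | ss h' => exact ⟨_, .ss h', .ns _⟩
  · intro b1 b2 b _ ih o3 o h
    cases h with
    | sn => exact ⟨_, .sn b2, .ss ‹merge b1 b2 b›⟩
    | ss h' => obtain ⟨C, h1, h2⟩ := ih _ _ h'; exact ⟨_, .ss h1, .ss h2⟩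

theorem stmt15 {P E V X : Type} :
    (∀ B : Beh P E V X, merge B B B) ∧
    (∀ B1 B2 B : Beh P E V X, merge B1 B2 B → merge B2 B1 B) ∧
    (∀ B1 B2 B3 B12 B : Beh P E V X, merge B1 B2 B12 → merge B12 B3 B →
      ∃ B23 : Beh P E V X, merge B2 B3 B23 ∧ merge B1 B23 B) := by
  exact ⟨merge_idem', fun _ _ _ h => merge_comm' h,
    fun _ _ _ _ _ h1 h2 => merge_assoc' h1 _ _ h2⟩
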